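/- Every eigenvalue of a 2×2 or 3×3 complex Permutation-Like Matrix is either 0 or a root of unity. -/

import Mathlib

/-!
A PLM is the matrix of a self-map `f` of the index set (column `j` has its `1` in row `f j`), and
this assignment is multiplicative, so the powers of a PLM are the matrices of the iterates of `f`.
Since `Fin d` has only finitely many self-maps, `A ^ m = A ^ n` for some `m < n`. Applying the
spectral mapping theorem to `X ^ m - X ^ n`, every eigenvalue `λ` satisfies `λ ^ m = λ ^ n`, so
`λ = 0` or `λ ^ (n - m) = 1`.
-/

def IsPLM {d : ℕ} (A : Matrix (Fin d) (Fin d) ℂ) : Prop :=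
  (∀ i j, A i j = 0 ∨ A i j = 1) ∧ ∀ j, ∃! i, A i j = 1

open Polynomial

theorem Function.exists_lt_iterate_eq_of_finite {α : Type*} [Finite α] (f : α → α) :
    ∃ m n : ℕ, m < n ∧ f^[m] = f^[n] := by
  obtain ⟨m, n, hne, h⟩ := Finite.exists_ne_map_eq_of_infinite (f^[·] : ℕ → α → α)
  rcases hne.lt_or_gt with hlt | hlt
  · exact ⟨m, n, hlt, h⟩
  · exact ⟨n, m, hlt, h.symm⟩

theorem eq_zero_or_pow_sub_eq_one_of_pow_eq_pow {M₀ : Type*} [MonoidWithZero M₀]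
    [IsCancelMulZero M₀] {x : M₀} {m n : ℕ} (hmn : m < n) (h : x ^ m = x ^ n) : x = 0 ∨ x ^ (n - m) = 1 := by
  refine or_iff_not_imp_left.mpr fun hx => mul_left_cancel₀ (pow_ne_zero m hx) ?_
  rw [← pow_add, add_tsub_cancel_of_le hmn.le, mul_one, h]

theorem spectrum.pow_eq_pow_of_mem {𝕜 A : Type*} [Field 𝕜] [Ring A] [Algebra 𝕜 A] {a : A}
    {m n : ℕ} (h : a ^ m = a ^ n) {k : 𝕜} (hk : k ∈ spectrum 𝕜 a) : k ^ m = k ^ n := by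
  have : Nontrivial A := by
    by_contra htriv
    rw [not_nontrivial_iff_subsingleton] at htriv
    simp [spectrum.of_subsingleton] at hk
  have hmem := spectrum.subset_polynomial_aeval a (X ^ m - X ^ n) ⟨k, hk, rfl⟩
  simpa [h, sub_eq_zero] using hmem

namespace Matrix

variable {n R : Type*} [DecidableEq n]

def funMatrix [Zero R] [One R] (f : n → n) : Matrix n n R :=
  of fun i j => if i = f j then 1 else 0

@[simp]
theorem funMatrix_apply [Zero R] [One R] (f : n → n) (i j : n) :
    (funMatrix f : Matrix n n R) i j = if i = f j then 1 else 0 :=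
  rfl

@[simp]
theorem funMatrix_id [Zero R] [One R] : (funMatrix id : Matrix n n R) = 1 := by
  ext i j
  simp [one_apply]

theorem funMatrix_comp [Fintype n] [NonAssocSemiring R] (f g : n → n) :
    (funMatrix (f ∘ g) : Matrix n n R) = funMatrix f * funMatrix g := by
  ext i j
  simp [mul_apply]

theorem funMatrix_iterate [Fintype n] [Semiring R] (f : n → n) (k : ℕ) :
    funMatrix (f^[k]) = (funMatrix f : Matrix n n R) ^ k := by
  induction k with
  | zero => simp
  | succ k ih => rw [Function.iterate_succ, funMatrix_comp, ih, pow_succ]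

end Matrix

open Matrix

theorem IsPLM.exists_eq_funMatrix {d : ℕ} {A : Matrix (Fin d) (Fin d) ℂ} (hA : IsPLM A) :
    ∃ f : Fin d → Fin d, A = funMatrix f := by
  obtain ⟨hA01, hAcol⟩ := hA
  choose f hf hf_unique using hAcol
  refine ⟨f, ext fun i j => ?_⟩
  rw [funMatrix_apply]
  split_ifs with hi
  · exact hi ▸ hf j
  · exact (hA01 i j).resolve_right fun h => hi (hf_unique j i h)

theorem plm_dim_two_three_eigenvalues_general {d : ℕ}
    (A : Matrix (Fin d) (Fin d) ℂ) (hA : IsPLM A) :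
    ∀ lam ∈ spectrum ℂ A, lam = 0 ∨ ∃ n ≥ 1, lam ^ n = 1 := by
  intro lam hlam
  obtain ⟨f, rfl⟩ := hA.exists_eq_funMatrix
  obtain ⟨m, n, hmn, hf⟩ := f.exists_lt_iterate_eq_of_finite
  have hpow : funMatrix f ^ m = (funMatrix f ^ n : Matrix (Fin d) (Fin d) ℂ) := by
    rw [← funMatrix_iterate, ← funMatrix_iterate, hf]
  have hlam_pow : lam ^ m = lam ^ n := spectrum.pow_eq_pow_of_mem hpow hlam
  exact (eq_zero_or_pow_sub_eq_one_of_pow_eq_pow hmn hlam_pow).imp_right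
    fun h => ⟨n - m, by omega, h⟩

theorem plm_dim_two_three_eigenvalues {d : ℕ} (hd : d = 2 ∨ d = 3)
    (A : Matrix (Fin d) (Fin d) ℂ) (hA : IsPLM A) :
    ∀ lam ∈ spectrum ℂ A, lam = 0 ∨ ∃ n ≥ 1, lam ^ n = 1 :=
  plm_dim_two_three_eigenvalues_general A hA
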